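/- Let (X, ≤) be a chain-complete partially ordered set with least element ⊥ and let F be a nonempty commutative family of chain-continuous maps from X to itself. If s is a least upper bound of the set {φ ⊥ : φ ∈ iter F}, then s is a common fixed point of F (f s = s for all f ∈ F) and s is the least element of the set of common fixed points: s ≤ u for every u ∈ X with f u = u for all f ∈ F. -/

import Mathlib

/-!
The set `{φ ⊥}` of iterates at `⊥` is only directed, not a chain, so chain-continuity cannot be
applied to it directly. Instead, apply Zorn's lemma to the set `W` of points `x` that lie below `s`
together with all their iterates and satisfy `x ≤ f x` for every `f ∈ F`. It contains `⊥`, is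
closed under suprema of nonempty chains by continuity, and is mapped into itself by each `f ∈ F`
thanks to commutativity. A maximal element `t` of `W` satisfies `t ≤ f t ∈ W`, hence is a common
fixed point below `s`, and `s ≤ t` because every iterate fixes `t`.
-/

/-- The composition closure of a family `F` of self-maps: all finite compositions
`f₁ ∘ ⋯ ∘ fₙ` with `n ≥ 1` and each `fᵢ ∈ F`. -/
inductive IterClosure {X : Type*} (F : Set (X → X)) : (X → X) → Prop
  | base {f : X → X} : f ∈ F → IterClosure F f
  | comp {f φ : X → X} : f ∈ F → IterClosure F φ → IterClosure F (f ∘ φ)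

open Function

def ChainContinuous {α β : Type*} [Preorder α] [Preorder β] (f : α → β) : Prop :=
  ∀ C : Set α, C.Nonempty → IsChain (· ≤ ·) C → ∀ x, IsLUB C x → IsLUB (f '' C) (f x)

namespace ChainContinuous

variable {α β γ : Type*} [Preorder α] [Preorder β] [Preorder γ]

theorem monotone {f : α → β} (hf : ChainContinuous f) : Monotone f := by
  intro x y hxy
  have hlub : IsLUB {x, y} y := IsGreatest.isLUB ⟨by simp, by simp [upperBounds, hxy]⟩
  exact (hf {x, y} (Set.insert_nonempty x {y}) (IsChain.pair hxy) y hlub).1 ⟨x, by simp, rfl⟩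

theorem comp {g : β → γ} {f : α → β} (hg : ChainContinuous g) (hf : ChainContinuous f) :
    ChainContinuous (g ∘ f) := by
  intro C hne hC x hx
  rw [Set.image_comp]
  exact hg _ (hne.image f) (hf.monotone.isChain_image hC) _ (hf C hne hC x hx)

end ChainContinuous

namespace IterClosure

variable {X : Type*} {F : Set (X → X)} {φ : X → X}

theorem induction_comp {P : (X → X) → Prop} (hφ : IterClosure F φ) (hF : ∀ f ∈ F, P f)
    (hcomp : ∀ f g, P f → P g → P (f ∘ g)) : P φ := by
  induction hφ with
  | base hf => exact hF _ hf
  | comp hf _ ih => exact hcomp _ _ (hF _ hf) ih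

theorem chainContinuous [Preorder X] (hφ : IterClosure F φ) (hF : ∀ f ∈ F, ChainContinuous f) :
    ChainContinuous φ :=
  hφ.induction_comp hF fun _ _ => ChainContinuous.comp

theorem commute (hφ : IterClosure F φ) {g : X → X} (hF : ∀ f ∈ F, Function.Commute f g) :
    Function.Commute φ g :=
  hφ.induction_comp hF fun _ _ => Function.Commute.comp_left

theorem isFixedPt (hφ : IterClosure F φ) {u : X} (hu : ∀ f ∈ F, IsFixedPt f u) : IsFixedPt φ u :=
  hφ.induction_comp hu fun _ _ => IsFixedPt.comp

end IterClosure

theorem exists_mem_forall_isFixedPt_of_inflationary {X : Type*} [PartialOrder X] {W : Set X}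
    (hne : W.Nonempty)
    (hchain : ∀ C ⊆ W, IsChain (· ≤ ·) C → ∀ y ∈ C, ∃ ub ∈ W, ∀ z ∈ C, z ≤ ub)
    {F : Set (X → X)} (hmaps : ∀ f ∈ F, Set.MapsTo f W W) (hle : ∀ f ∈ F, ∀ x ∈ W, x ≤ f x) :
    ∃ t ∈ W, ∀ f ∈ F, IsFixedPt f t := by
  obtain ⟨x, hx⟩ := hne
  obtain ⟨t, -, ht⟩ := zorn_le_nonempty₀ W hchain x hx
  exact ⟨t, ht.prop, fun f hf => (ht.eq_of_le (hmaps f hf ht.prop) (hle f hf t ht.prop)).symm⟩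

theorem exists_forall_isFixedPt_le_of_iterates_le {X : Type*} [PartialOrder X]
    (hcc : ∀ C : Set X, IsChain (· ≤ ·) C → ∃ s, IsLUB C s)
    {bot : X} (hbot : ∀ x : X, bot ≤ x) {F : Set (X → X)} (hcont : ∀ f ∈ F, ChainContinuous f)
    (hcomm : ∀ f ∈ F, ∀ g ∈ F, Function.Commute f g) {s : X}
    (hs : ∀ φ, IterClosure F φ → φ bot ≤ s) :
    ∃ t ≤ s, ∀ f ∈ F, IsFixedPt f t := by
  let W : Set X := {x | x ≤ s ∧ (∀ φ, IterClosure F φ → φ x ≤ s) ∧ ∀ f ∈ F, x ≤ f x}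
  have hbotW : bot ∈ W := ⟨hbot s, hs, fun f _ => hbot (f bot)⟩
  have hchain : ∀ C ⊆ W, IsChain (· ≤ ·) C → ∀ y ∈ C, ∃ ub ∈ W, ∀ z ∈ C, z ≤ ub := by
    intro C hCW hC y hy
    obtain ⟨t, ht⟩ := hcc C hC
    refine ⟨t, ⟨ht.2 fun c hc => (hCW hc).1, fun φ hφ => ?_, fun f hf => ?_⟩, ht.1⟩
    · refine (hφ.chainContinuous hcont C ⟨y, hy⟩ hC t ht).2 ?_
      rintro _ ⟨c, hc, rfl⟩
      exact (hCW hc).2.1 φ hφ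
    · exact ht.2 fun c hc =>
        ((hCW hc).2.2 f hf).trans ((hcont f hf C ⟨y, hy⟩ hC t ht).1 ⟨c, hc, rfl⟩)
  have hmaps : ∀ f ∈ F, Set.MapsTo f W W := by
    rintro f hf x ⟨-, hxφ, hxF⟩
    refine ⟨hxφ f (.base hf), fun φ hφ => ?_, fun g hg => ?_⟩
    · rw [(hφ.commute fun g hg => hcomm g hg f hf) x]
      exact hxφ _ (.comp hf hφ)
    · rw [← hcomm f hf g hg x]
      exact (hcont f hf).monotone (hxF g hg)
  obtain ⟨t, htW, ht⟩ := exists_mem_forall_isFixedPt_of_inflationary ⟨bot, hbotW⟩ hchain hmaps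
    fun f hf x hx => hx.2.2 f hf
  exact ⟨t, htW.1, ht⟩

theorem stmt_3_general {X : Type*} [PartialOrder X]
    (hcc : ∀ C : Set X, IsChain (· ≤ ·) C → ∃ s, IsLUB C s)
    (bot : X) (hbot : ∀ x : X, bot ≤ x)
    (F : Set (X → X))
    (hcont : ∀ f ∈ F, ∀ C : Set X, C.Nonempty → IsChain (· ≤ ·) C →
      ∀ x, IsLUB C x → IsLUB (f '' C) (f x))
    (hcomm : ∀ f ∈ F, ∀ g ∈ F, f ∘ g = g ∘ f)
    (s : X)
    (hs : IsLUB {y : X | ∃ φ : X → X, IterClosure F φ ∧ y = φ bot} s) :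
    (∀ f ∈ F, f s = s) ∧ ∀ u : X, (∀ f ∈ F, f u = u) → s ≤ u := by
  have hleast : ∀ u : X, (∀ f ∈ F, f u = u) → s ≤ u := by
    refine fun u hu => hs.2 ?_
    rintro _ ⟨φ, hφ, rfl⟩
    exact ((hφ.chainContinuous hcont).monotone (hbot u)).trans_eq (hφ.isFixedPt hu)
  obtain ⟨t, hts, ht⟩ := exists_forall_isFixedPt_le_of_iterates_le hcc hbot hcont
    (fun f hf g hg => congrFun (hcomm f hf g hg)) fun φ hφ => hs.1 ⟨φ, hφ, rfl⟩
  obtain rfl : s = t := (hleast t ht).antisymm hts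
  exact ⟨ht, hleast⟩

/-- In a chain-complete poset with least element `bot`, for a nonempty
commutative family `F` of chain-continuous self-maps, a least upper bound `s` of
`{φ bot : φ ∈ iter F}` is a common fixed point of `F` and is the least such. -/
theorem stmt_3 {X : Type*} [PartialOrder X]
    (hcc : ∀ C : Set X, IsChain (· ≤ ·) C → ∃ s, IsLUB C s)
    (bot : X) (hbot : ∀ x : X, bot ≤ x)
    (F : Set (X → X)) (hF : F.Nonempty)
    (hcont : ∀ f ∈ F, ∀ C : Set X, C.Nonempty → IsChain (· ≤ ·) C →
      ∀ x, IsLUB C x → IsLUB (f '' C) (f x))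
    (hcomm : ∀ f ∈ F, ∀ g ∈ F, f ∘ g = g ∘ f)
    (s : X)
    (hs : IsLUB {y : X | ∃ φ : X → X, IterClosure F φ ∧ y = φ bot} s) :
    (∀ f ∈ F, f s = s) ∧ ∀ u : X, (∀ f ∈ F, f u = u) → s ≤ u :=
  stmt_3_general hcc bot hbot F hcont hcomm s hs
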